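/- (Theorem 1, Part 3) Suppose F is mixed-monotone with respect to a decomposition function d, and let (a, â) : [0, ∞) → ℝⁿ × ℝⁿ be a solution of the deterministic embedding ODE (ȧ, ȧ̂) = e(a, â) with a(0) ⪯ â(0) and 0 ⪯_SE e(a(0), â(0)), and let (x_eq, x̂_eq) := lim_{t→∞} (a(t), â(t)) (which exists). Then the hyperrectangle [x_eq, x̂_eq] is robustly forward invariant for ẋ = F(x, w) and is attractive from [a(0), â(0)]: for every solution x : [0, ∞) → ℝⁿ of ẋ = F(x, w(t)) under a piecewise continuous disturbance w valued in 𝒲 with x(0) ∈ [a(0), â(0)], and every open set U ⊇ [x_eq, x̂_eq], there exists T > 0 such that x(t) ∈ U for all t ≥ T. -/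

import Mathlib

/-!
Comparison with the embedding system: if `a(0) ⪯ x(0) ⪯ â(0)` then `a(t) ⪯ x(t) ⪯ â(t)`. At a time
where the largest of the numbers `aᵢ - xᵢ`, `xᵢ - âᵢ` is `μ ≥ 0`, say `aᵢ - xᵢ`, monotonicity of `d`
gives `ȧᵢ - ẋᵢ ≤ dᵢ(x + μ, w, x - μ, w) - dᵢ(x, w, x, w) ≤ K μ` with `K` a Lipschitz constant of `d` on
a compact set, and a Grönwall argument keeps that maximum nonpositive.

The limit `(x_eq, x̂_eq)` of an embedding solution is an equilibrium of the embedding system, so the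
constant pair is itself an embedding solution: comparing with it gives invariance. Comparing with
`(a, â)` traps `x(t)` in `[a(t), â(t)]`, a box that eventually lies in any open neighbourhood
of `[x_eq, x̂_eq]`.
-/

open Set Function Filter Topology

/-- A function is piecewise continuous on a set `s` if it is continuous on `s` off of
finitely many points. -/
def PiecewiseContinuousOn {α : Type*} [TopologicalSpace α] (w : ℝ → α) (s : Set ℝ) : Prop :=
  ∃ E : Finset ℝ, ContinuousOn w (s \ (E : Set ℝ))

/-- `d` is a decomposition function for the vector field `F` on state space `ℝⁿ` with
disturbance set `𝒲 = Set.Icc wl wu ⊆ ℝᵐ`:  `d` is locally Lipschitz, agrees with `F` on the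
diagonal, `dᵢ` is nondecreasing in `xⱼ` for `j ≠ i`, nonincreasing in every component of `x̂`,
nondecreasing in every component of `w` and nonincreasing in every component of `ŵ`. -/
def IsDecompositionFunction {n m : ℕ} (wl wu : Fin m → ℝ)
    (F : (Fin n → ℝ) → (Fin m → ℝ) → (Fin n → ℝ))
    (d : (Fin n → ℝ) → (Fin m → ℝ) → (Fin n → ℝ) → (Fin m → ℝ) → (Fin n → ℝ)) : Prop :=
  LocallyLipschitz
      (fun p : ((Fin n → ℝ) × (Fin m → ℝ)) × ((Fin n → ℝ) × (Fin m → ℝ)) =>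
        d p.1.1 p.1.2 p.2.1 p.2.2)
    ∧ (∀ x : Fin n → ℝ, ∀ w ∈ Set.Icc wl wu, d x w x w = F x w)
    ∧ (∀ (i j : Fin n), j ≠ i → ∀ (x xh : Fin n → ℝ) (s t : ℝ), s ≤ t →
        ∀ w ∈ Set.Icc wl wu, ∀ wh ∈ Set.Icc wl wu,
          d (Function.update x j s) w xh wh i ≤ d (Function.update x j t) w xh wh i)
    ∧ (∀ (i j : Fin n) (x xh : Fin n → ℝ) (s t : ℝ), s ≤ t →
        ∀ w ∈ Set.Icc wl wu, ∀ wh ∈ Set.Icc wl wu,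
          d x w (Function.update xh j t) wh i ≤ d x w (Function.update xh j s) wh i)
    ∧ (∀ (i : Fin n) (k : Fin m) (x xh : Fin n → ℝ) (s t : ℝ),
        wl k ≤ s → s ≤ t → t ≤ wu k →
        ∀ w ∈ Set.Icc wl wu, ∀ wh ∈ Set.Icc wl wu,
          d x (Function.update w k s) xh wh i ≤ d x (Function.update w k t) xh wh i)
    ∧ (∀ (i : Fin n) (k : Fin m) (x xh : Fin n → ℝ) (s t : ℝ),
        wl k ≤ s → s ≤ t → t ≤ wu k →
        ∀ w ∈ Set.Icc wl wu, ∀ wh ∈ Set.Icc wl wu,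
          d x w xh (Function.update wh k t) i ≤ d x w xh (Function.update wh k s) i)


open Metric NNReal

theorem monotoneOn_Icc_of_monotoneOn_update {ι α β : Type*} [Fintype ι] [DecidableEq ι]
    [Preorder α] [Preorder β] {φ : (ι → α) → β} {lo hi : ι → α}
    (h : ∀ y ∈ Icc lo hi, ∀ j, MonotoneOn (fun s => φ (update y j s)) (Icc (lo j) (hi j))) :
    MonotoneOn φ (Icc lo hi) := by
  intro x hx x' hx' hxx'
  have hsub : Icc x x' ⊆ Icc lo hi := Icc_subset_Icc hx.1 hx'.2
  suffices H : ∀ s : Finset ι, ∀ y ∈ Icc x x', (∀ j ∉ s, y j = x' j) → φ y ≤ φ x' from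
    H Finset.univ x ⟨le_rfl, hxx'⟩ (by simp)
  intro s
  induction s using Finset.induction_on with
  | empty => exact fun y _ hy => (funext fun j => hy j (Finset.notMem_empty j)) ▸ le_rfl
  | insert k s _ ih =>
    intro y hy hys
    set z := update y k (x' k)
    have hz : z ∈ Icc x x' := ⟨le_update_iff.2 ⟨hxx' k, fun j _ => hy.1 j⟩,
      update_le_iff.2 ⟨le_rfl, fun j _ => hy.2 j⟩⟩
    have hyz : φ y ≤ φ z := by
      have hk := h y (hsub hy) k ⟨(hsub hy).1 k, (hsub hy).2 k⟩ ⟨hx.1 k |>.trans (hxx' k),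
        hx'.2 k⟩ (hy.2 k)
      simpa only [update_eq_self] using hk
    refine hyz.trans (ih z hz fun j hj => ?_)
    by_cases hjk : j = k
    · simp [z, hjk]
    · simp [z, update_of_ne hjk, hys j (by simp [hj, hjk])]

theorem add_sub_const_mem_closedBall {ι : Type*} [Fintype ι] {x : ι → ℝ} {μ : ℝ} (hμ : 0 ≤ μ) :
    (x + fun _ => μ) ∈ closedBall x μ ∧ (x - fun _ => μ) ∈ closedBall x μ := by
  simp only [mem_closedBall, dist_pi_le_iff hμ, Pi.add_apply, Pi.sub_apply, Real.dist_eq]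
  exact ⟨fun j => by simp [abs_of_nonneg hμ], fun j => by simp [abs_of_nonneg hμ]⟩

theorem nonpos_of_deriv_le_mul_at_argmax' {ι : Type*} [Fintype ι] [Nonempty ι]
    {g g' : ι → ℝ → ℝ} {K a b : ℝ} (hg : ∀ i, ∀ t ∈ Icc a b, HasDerivAt (g i) (g' i t) t)
    (ha : ∀ i, g i a ≤ 0)
    (bound : ∀ t ∈ Ico a b, ∀ i, (∀ j, g j t ≤ g i t) → g' i t ≤ K * g i t) :
    ∀ t ∈ Icc a b, ∀ i, g i t ≤ 0 := by
  let f : ℝ → ℝ := fun t => Finset.univ.sup' Finset.univ_nonempty fun i => g i t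
  have hgf : ∀ i t, g i t ≤ f t := fun i t => Finset.le_sup' (fun i => g i t) (Finset.mem_univ i)
  have hf : ContinuousOn f (Icc a b) := ContinuousOn.finset_sup'_apply Finset.univ_nonempty
    fun i _ t ht => (hg i t ht).continuousAt.continuousWithinAt
  have hJ : ∀ t, ∃ i, ∃ᶠ z in 𝓝[>] t, f z = g i z := fun t => frequently_exists.1 <|
    Eventually.frequently <| Eventually.of_forall fun z => by
      obtain ⟨i, -, hi⟩ := Finset.exists_mem_eq_sup' Finset.univ_nonempty fun i => g i z
      exact ⟨i, hi⟩
  choose J hJ using hJ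
  have hfJ : ∀ t ∈ Ico a b, f t = g (J t) t := fun t ht =>
    tendsto_nhds_unique_of_frequently_eq
      ((hf.continuousWithinAt (Ico_subset_Icc_self ht)).mono_of_mem_nhdsWithin
        (Icc_mem_nhdsGT_of_mem ht)).tendsto
      ((hg _ t (Ico_subset_Icc_self ht)).continuousAt.tendsto.mono_left nhdsWithin_le_nhds)
      (hJ t)
  -- the right lower Dini derivative of `f` at `t` is at most `g' (J t) t`
  have hslope : ∀ t ∈ Ico a b, ∀ r, g' (J t) t < r →
      ∃ᶠ z in 𝓝[>] t, (z - t)⁻¹ * (f z - f t) < r := by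
    intro t ht r hr
    have hlt : ∀ᶠ z in 𝓝[>] t, slope (g (J t)) t z < r :=
      ((hg _ t (Ico_subset_Icc_self ht)).tendsto_slope.mono_left
        (nhdsWithin_mono _ fun z hz => ne_of_gt hz)).eventually_lt_const hr
    refine (hJ t).and_eventually hlt |>.mono fun z ⟨hfz, hz⟩ => ?_
    rwa [slope_def_field, ← hfz, ← hfJ t ht, div_eq_inv_mul] at hz
  have hbound : ∀ t ∈ Ico a b, g' (J t) t ≤ K * f t + 0 := fun t ht => by
    rw [add_zero, hfJ t ht]
    exact bound t ht (J t) fun j => hfJ t ht ▸ hgf j t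
  intro t ht i
  have hft := le_gronwallBound_of_liminf_deriv_right_le hf hslope
    (Finset.sup'_le _ _ fun i _ => ha i) hbound t ht
  rw [gronwallBound_ε0_δ0] at hft
  exact (hgf i t).trans hft

theorem nonpos_of_deriv_le_mul_at_argmax {ι : Type*} [Fintype ι] {g g' : ι → ℝ → ℝ}
    {K a b : ℝ} (hg : ∀ i, ∀ t ∈ Icc a b, HasDerivAt (g i) (g' i t) t)
    (ha : ∀ i, g i a ≤ 0)
    (bound : ∀ t ∈ Ico a b, ∀ i, 0 ≤ g i t → (∀ j, g j t ≤ g i t) → g' i t ≤ K * g i t) :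
    ∀ t ∈ Icc a b, ∀ i, g i t ≤ 0 := by
  -- `none` indexes the constant `0`, which makes the sign condition automatic at a maximum
  have := nonpos_of_deriv_le_mul_at_argmax' (K := K)
    (g := fun (o : Option ι) t => o.elim 0 fun i => g i t)
    (g' := fun o t => o.elim 0 fun i => g' i t)
    (by rintro (_ | i) t ht; exacts [hasDerivAt_const t 0, hg i t ht])
    (by rintro (_ | i); exacts [le_rfl, ha i])
    (by rintro t ht (_ | i) hmax; exacts [by simp, bound t ht i (hmax none) fun j => hmax (some j)])
  exact fun t ht i => this t ht (some i)

theorem eq_zero_of_tendsto_of_hasDerivAt_tendsto {E : Type*} [NormedAddCommGroup E]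
    [NormedSpace ℝ E] {f f' : ℝ → E} {L c : E} (hf : ∀ᶠ t in atTop, HasDerivAt f (f' t) t)
    (hL : Tendsto f atTop (𝓝 L)) (hc : Tendsto f' atTop (𝓝 c)) : c = 0 := by
  have h0 : Tendsto (fun t => f (t + 1) - f t) atTop (𝓝 0) := by
    simpa using (hL.comp (tendsto_atTop_add_const_right _ 1 tendsto_id)).sub hL
  refine tendsto_nhds_unique (Metric.tendsto_nhds.2 fun ε hε => ?_) h0
  have hev := eventually_forall_ge_atTop.2 <|
    hf.and (Metric.tendsto_nhds.1 hc (ε / 2) (half_pos hε))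
  filter_upwards [hev] with t ht
  have hmvt := norm_image_sub_le_of_norm_deriv_le_segment' (f := fun s => f s - s • c)
    (a := t) (b := t + 1) (C := ε / 2)
    (fun s hs => (((ht s hs.1).1.sub ((hasDerivAt_id s).smul_const c))).hasDerivWithinAt)
    (fun s hs => by simpa [← dist_eq_norm] using (ht s hs.1).2.le) (t + 1) ⟨by linarith, le_rfl⟩
  rw [dist_eq_norm]
  calc ‖f (t + 1) - f t - c‖ = ‖f (t + 1) - (t + 1) • c - (f t - t • c)‖ := by
        congr 1; rw [add_smul, one_smul]; abel
    _ ≤ ε / 2 * (t + 1 - t) := hmvt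
    _ < ε := by linarith

theorem apply_eq_zero_of_tendsto_of_hasDerivAt {E : Type*} [NormedAddCommGroup E]
    [NormedSpace ℝ E] {G : E → E} {x : ℝ → E} {L : E} (hG : ContinuousAt G L)
    (hx : ∀ᶠ t in atTop, HasDerivAt x (G (x t)) t) (hL : Tendsto x atTop (𝓝 L)) : G L = 0 :=
  eq_zero_of_tendsto_of_hasDerivAt_tendsto hx hL (hG.tendsto.comp hL)

theorem eventually_Icc_subset_of_tendsto {ι α : Type*} [Finite ι] {l : Filter α}
    {a b : α → ι → ℝ} {x y : ι → ℝ} {U : Set (ι → ℝ)} (ha : Tendsto a l (𝓝 x))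
    (hb : Tendsto b l (𝓝 y)) (hU : IsOpen U) (hxy : Icc x y ⊆ U) :
    ∀ᶠ t in l, Icc (a t) (b t) ⊆ U := by
  let V : Ioi (0 : ℝ) → Set (ι → ℝ) := fun δ =>
    Icc (x - fun _ => (δ : ℝ)) (y + fun _ => (δ : ℝ))
  obtain ⟨⟨δ, hδ⟩, hVU⟩ : ∃ δ, V δ ⊆ U := by
    refine exists_subset_nhds_of_isCompact' ?_ (fun _ => isCompact_Icc) (fun _ => isClosed_Icc)
      fun z hz => hU.mem_nhds (hxy ?_)
    · intro δ δ'
      refine ⟨⟨min δ δ', mem_Ioi.2 (lt_min δ.2 δ'.2)⟩, ?_, ?_⟩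
      · exact Icc_subset_Icc (fun j => sub_le_sub_left (min_le_left _ _) (x j))
          (fun j => add_le_add_right (min_le_left _ _) (y j))
      · exact Icc_subset_Icc (fun j => sub_le_sub_left (min_le_right _ _) (x j))
          (fun j => add_le_add_right (min_le_right _ _) (y j))
    · have hz' : ∀ δ > 0, ∀ j, x j - δ ≤ z j ∧ z j ≤ y j + δ := fun δ hδ j =>
        ⟨(mem_iInter.1 hz ⟨δ, hδ⟩).1 j, (mem_iInter.1 hz ⟨δ, hδ⟩).2 j⟩
      exact ⟨fun j => le_of_forall_pos_le_add fun δ hδ => by linarith [(hz' δ hδ j).1],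
        fun j => le_of_forall_pos_le_add fun δ hδ => (hz' δ hδ j).2⟩
  have hnhds : ∀ z : ι → ℝ, Icc (z - fun _ => δ) (z + fun _ => δ) ∈ 𝓝 z := fun z =>
    pi_Icc_mem_nhds (fun j => by simpa using hδ) (fun j => by simpa using hδ)
  filter_upwards [ha (hnhds x), hb (hnhds y)] with t hat hbt
  exact (Icc_subset_Icc hat.1 hbt.2).trans hVU

namespace IsDecompositionFunction

variable {n m : ℕ} {wl wu : Fin m → ℝ} {F : (Fin n → ℝ) → (Fin m → ℝ) → (Fin n → ℝ)}
  {d : (Fin n → ℝ) → (Fin m → ℝ) → (Fin n → ℝ) → (Fin m → ℝ) → (Fin n → ℝ)}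

theorem apply_le_apply (hd : IsDecompositionFunction wl wu F d) (i : Fin n)
    {x x' xh xh' : Fin n → ℝ} {w w' wh wh' : Fin m → ℝ} (hx : x ≤ x') (hxi : x i = x' i)
    (hxh : xh' ≤ xh) (hw : w ≤ w') (hwh : wh' ≤ wh) (hwW : w ∈ Icc wl wu)
    (hw'W : w' ∈ Icc wl wu) (hwhW : wh ∈ Icc wl wu) (hwh'W : wh' ∈ Icc wl wu) :
    d x w xh wh i ≤ d x' w' xh' wh' i := by
  obtain ⟨-, -, hdx, hdxh, hdw, hdwh⟩ := hd
  calc d x w xh wh i ≤ d x' w xh wh i := by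
        refine monotoneOn_Icc_of_monotoneOn_update (φ := fun y => d y w xh wh i)
          (fun y _ j => ?_) ⟨le_rfl, hx⟩ ⟨hx, le_rfl⟩ hx
        rcases eq_or_ne j i with rfl | hji
        · exact (subsingleton_Icc_of_ge hxi.ge).monotoneOn _
        · exact fun s _ t _ hst => hdx i j hji y xh s t hst w hwW wh hwhW
    _ ≤ d x' w xh' wh i :=
        monotoneOn_Icc_of_monotoneOn_update (β := ℝᵒᵈ) (φ := fun y => d x' w y wh i)
          (fun y _ j s _ t _ hst => hdxh i j x' y s t hst w hwW wh hwhW)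
          ⟨le_rfl, hxh⟩ ⟨hxh, le_rfl⟩ hxh
    _ ≤ d x' w' xh' wh i :=
        monotoneOn_Icc_of_monotoneOn_update (φ := fun v => d x' v xh' wh i)
          (fun v hv k s hs t ht hst => hdw i k x' xh' s t hs.1 hst ht.2 v hv wh hwhW) hwW hw'W hw
    _ ≤ d x' w' xh' wh' i :=
        monotoneOn_Icc_of_monotoneOn_update (β := ℝᵒᵈ) (φ := fun v => d x' w' xh' v i)
          (fun v hv k s hs t ht hst => hdwh i k x' xh' s t hs.1 hst ht.2 w' hw'W v hv)
          hwh'W hwhW hwh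

theorem abs_apply_sub_le (hd : IsDecompositionFunction wl wu F d) {B : Set (Fin n → ℝ)} {K : ℝ≥0}
    (hK : LipschitzOnWith K
      (fun p : ((Fin n → ℝ) × (Fin m → ℝ)) × ((Fin n → ℝ) × (Fin m → ℝ)) =>
        d p.1.1 p.1.2 p.2.1 p.2.2) ((B ×ˢ Icc wl wu) ×ˢ (B ×ˢ Icc wl wu)))
    {x p q : Fin n → ℝ} {w : Fin m → ℝ} {μ : ℝ} (hB : closedBall x μ ⊆ B)
    (hw : w ∈ Icc wl wu) (hp : p ∈ closedBall x μ) (hq : q ∈ closedBall x μ) (i : Fin n) :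
    |d p w q w i - F x w i| ≤ K * μ := by
  have hx : x ∈ closedBall x μ := mem_closedBall_self (dist_nonneg.trans hp)
  rw [← hd.2.1 x w hw, ← Real.dist_eq]
  calc dist (d p w q w i) (d x w x w i) ≤ dist (d p w q w) (d x w x w) :=
        dist_le_pi_dist (d p w q w) (d x w x w) i
    _ ≤ K * dist ((p, w), (q, w)) ((x, w), (x, w)) :=
        hK.dist_le_mul ((p, w), (q, w)) ⟨⟨hB hp, hw⟩, hB hq, hw⟩ ((x, w), (x, w))
          ⟨⟨hB hx, hw⟩, hB hx, hw⟩
    _ ≤ K * μ := by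
        rw [Prod.dist_eq, dist_prod_same_right, dist_prod_same_right]
        exact mul_le_mul_of_nonneg_left (max_le hp hq) K.2

theorem lower_deriv_sub_le (hd : IsDecompositionFunction wl wu F d) (hwlu : wl ≤ wu)
    {B : Set (Fin n → ℝ)} {K : ℝ≥0}
    (hK : LipschitzOnWith K
      (fun p : ((Fin n → ℝ) × (Fin m → ℝ)) × ((Fin n → ℝ) × (Fin m → ℝ)) =>
        d p.1.1 p.1.2 p.2.1 p.2.2) ((B ×ˢ Icc wl wu) ×ˢ (B ×ˢ Icc wl wu)))
    {a ah x : Fin n → ℝ} {w : Fin m → ℝ} {μ : ℝ} {i : Fin n} (hB : closedBall x μ ⊆ B)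
    (hw : w ∈ Icc wl wu) (hμ : 0 ≤ μ) (ha : ∀ j, a j - x j ≤ μ) (hah : ∀ j, x j - ah j ≤ μ)
    (hai : a i - x i = μ) :
    d a wl ah wu i - F x w i ≤ K * μ := by
  obtain ⟨hp, hq⟩ := add_sub_const_mem_closedBall (x := x) hμ
  have hmono : d a wl ah wu i ≤ d (x + fun _ => μ) w (x - fun _ => μ) w i :=
    hd.apply_le_apply i (fun j => by simp only [Pi.add_apply]; linarith [ha j])
      (by simp only [Pi.add_apply]; linarith) (fun j => by simp only [Pi.sub_apply]; linarith [hah j]) hw.1 hw.2 ⟨le_rfl, hwlu⟩ hw ⟨hwlu, le_rfl⟩ hw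
  linarith [(abs_le.1 (hd.abs_apply_sub_le hK hB hw hp hq i)).2]

theorem sub_upper_deriv_le (hd : IsDecompositionFunction wl wu F d) (hwlu : wl ≤ wu)
    {B : Set (Fin n → ℝ)} {K : ℝ≥0}
    (hK : LipschitzOnWith K
      (fun p : ((Fin n → ℝ) × (Fin m → ℝ)) × ((Fin n → ℝ) × (Fin m → ℝ)) =>
        d p.1.1 p.1.2 p.2.1 p.2.2) ((B ×ˢ Icc wl wu) ×ˢ (B ×ˢ Icc wl wu)))
    {a ah x : Fin n → ℝ} {w : Fin m → ℝ} {μ : ℝ} {i : Fin n} (hB : closedBall x μ ⊆ B)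
    (hw : w ∈ Icc wl wu) (hμ : 0 ≤ μ) (ha : ∀ j, a j - x j ≤ μ) (hah : ∀ j, x j - ah j ≤ μ)
    (hahi : x i - ah i = μ) :
    F x w i - d ah wu a wl i ≤ K * μ := by
  obtain ⟨hp, hq⟩ := add_sub_const_mem_closedBall (x := x) hμ
  have hmono : d (x - fun _ => μ) w (x + fun _ => μ) w i ≤ d ah wu a wl i :=
    hd.apply_le_apply i (fun j => by simp only [Pi.sub_apply]; linarith [hah j])
      (by simp only [Pi.sub_apply]; linarith) (fun j => by simp only [Pi.add_apply]; linarith [ha j]) hw.2 hw.1 hw ⟨hwlu, le_rfl⟩ hw ⟨le_rfl, hwlu⟩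
  linarith [(abs_le.1 (hd.abs_apply_sub_le hK hB hw hq hp i)).1]

theorem exists_lipschitzOnWith (hd : IsDecompositionFunction wl wu F d)
    {B : Set (Fin n → ℝ)} (hB : IsCompact B) :
    ∃ K : ℝ≥0, LipschitzOnWith K
      (fun p : ((Fin n → ℝ) × (Fin m → ℝ)) × ((Fin n → ℝ) × (Fin m → ℝ)) =>
        d p.1.1 p.1.2 p.2.1 p.2.2) ((B ×ˢ Icc wl wu) ×ˢ (B ×ˢ Icc wl wu)) :=
  LocallyLipschitzOn.exists_lipschitzOnWith_of_compact
    ((hB.prod isCompact_Icc).prod (hB.prod isCompact_Icc)) hd.1.locallyLipschitzOn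

theorem mem_Icc_of_embedding (hd : IsDecompositionFunction wl wu F d) (hwlu : wl ≤ wu)
    {T : ℝ} {a ah x : ℝ → Fin n → ℝ} {w : ℝ → Fin m → ℝ}
    (ha : ∀ t ∈ Icc 0 T, HasDerivAt a (d (a t) wl (ah t) wu) t)
    (hah : ∀ t ∈ Icc 0 T, HasDerivAt ah (d (ah t) wu (a t) wl) t)
    (hw : ∀ t ∈ Icc 0 T, w t ∈ Icc wl wu) (hx : ∀ t ∈ Icc 0 T, HasDerivAt x (F (x t) (w t)) t)
    (h0 : x 0 ∈ Icc (a 0) (ah 0)) :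
    ∀ t ∈ Icc 0 T, x t ∈ Icc (a t) (ah t) := by
  have hac : ContinuousOn a (Icc 0 T) := fun t ht => (ha t ht).continuousAt.continuousWithinAt
  have hahc : ContinuousOn ah (Icc 0 T) := fun t ht => (hah t ht).continuousAt.continuousWithinAt
  have hxc : ContinuousOn x (Icc 0 T) := fun t ht => (hx t ht).continuousAt.continuousWithinAt
  obtain ⟨R, hR⟩ :=
    isCompact_Icc.exists_bound_of_continuousOn ((hac.sub hxc).prodMk (hxc.sub hahc))
  obtain ⟨K, hK⟩ := hd.exists_lipschitzOnWith
    ((isCompact_Icc.image_of_continuousOn hxc).cthickening (r := R))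
  have hB : ∀ t ∈ Icc 0 T, ∀ μ ≤ R, closedBall (x t) μ ⊆ cthickening R (x '' Icc 0 T) :=
    fun t ht μ hμ => (closedBall_subset_closedBall hμ).trans
      (closedBall_subset_cthickening (mem_image_of_mem x ht) R)
  have hg := nonpos_of_deriv_le_mul_at_argmax (K := K) (a := 0) (b := T)
    (g := Sum.elim (fun i t => a t i - x t i) (fun i t => x t i - ah t i))
    (g' := Sum.elim (fun i t => d (a t) wl (ah t) wu i - F (x t) (w t) i)
      (fun i t => F (x t) (w t) i - d (ah t) wu (a t) wl i)) ?_ ?_ ?_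
  · exact fun t ht => ⟨fun i => sub_nonpos.1 (hg t ht (.inl i)),
      fun i => sub_nonpos.1 (hg t ht (.inr i))⟩
  · rintro (i | i) t ht
    · exact (hasDerivAt_pi.1 (ha t ht) i).sub (hasDerivAt_pi.1 (hx t ht) i)
    · exact (hasDerivAt_pi.1 (hx t ht) i).sub (hasDerivAt_pi.1 (hah t ht) i)
  · rintro (i | i)
    exacts [sub_nonpos.2 (h0.1 i), sub_nonpos.2 (h0.2 i)]
  · rintro t ht (i | i) hμ hmax
    · refine hd.lower_deriv_sub_le hwlu hK (hB t (Ico_subset_Icc_self ht) _ ?_)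
        (hw t (Ico_subset_Icc_self ht)) hμ (fun j => hmax (.inl j)) (fun j => hmax (.inr j)) rfl
      exact (le_abs_self _).trans <| (norm_le_pi_norm (a t - x t) i).trans <|
        (norm_fst_le _).trans (hR t (Ico_subset_Icc_self ht))
    · refine hd.sub_upper_deriv_le hwlu hK (hB t (Ico_subset_Icc_self ht) _ ?_)
        (hw t (Ico_subset_Icc_self ht)) hμ (fun j => hmax (.inl j)) (fun j => hmax (.inr j)) rfl
      exact (le_abs_self _).trans <| (norm_le_pi_norm (x t - ah t) i).trans <|
        (norm_snd_le _).trans (hR t (Ico_subset_Icc_self ht))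

end IsDecompositionFunction

theorem thm1_part3_invariant_and_attractive_general
    {n m : ℕ} (wl wu : Fin m → ℝ) (hwlu : wl ≤ wu)
    (F : (Fin n → ℝ) → (Fin m → ℝ) → (Fin n → ℝ))
    (d : (Fin n → ℝ) → (Fin m → ℝ) → (Fin n → ℝ) → (Fin m → ℝ) → (Fin n → ℝ))
    (hd : IsDecompositionFunction wl wu F d)
    -- (a, ah) solves the deterministic embedding ODE on [0, ∞)
    (a ah : ℝ → (Fin n → ℝ))
    (ha : ∀ t ∈ Set.Ici (0:ℝ), HasDerivAt a (d (a t) wl (ah t) wu) t)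
    (hah : ∀ t ∈ Set.Ici (0:ℝ), HasDerivAt ah (d (ah t) wu (a t) wl) t)
    -- (xeq, xheq) is the limit of the embedding solution
    (xeq xheq : Fin n → ℝ)
    (hlim : Filter.Tendsto a Filter.atTop (nhds xeq))
    (hlimh : Filter.Tendsto ah Filter.atTop (nhds xheq)) :
    -- [xeq, xheq] is robustly forward invariant for ẋ = F(x, w)
    (∀ T : ℝ, 0 ≤ T →
      ∀ (x : ℝ → (Fin n → ℝ)) (w : ℝ → (Fin m → ℝ)),
        (∀ t ∈ Set.Icc (0:ℝ) T, w t ∈ Set.Icc wl wu) →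
        PiecewiseContinuousOn w (Set.Icc 0 T) →
        (∀ t ∈ Set.Icc (0:ℝ) T, HasDerivAt x (F (x t) (w t)) t) →
        x 0 ∈ Set.Icc xeq xheq →
        ∀ t ∈ Set.Icc (0:ℝ) T, x t ∈ Set.Icc xeq xheq) ∧
    -- [xeq, xheq] is attractive from [a 0, ah 0]
    (∀ (x : ℝ → (Fin n → ℝ)) (w : ℝ → (Fin m → ℝ)),
      (∀ t ∈ Set.Ici (0:ℝ), w t ∈ Set.Icc wl wu) →
      PiecewiseContinuousOn w (Set.Ici 0) →
      (∀ t ∈ Set.Ici (0:ℝ), HasDerivAt x (F (x t) (w t)) t) →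
      x 0 ∈ Set.Icc (a 0) (ah 0) →
      ∀ U : Set (Fin n → ℝ), IsOpen U → Set.Icc xeq xheq ⊆ U →
        ∃ T : ℝ, 0 < T ∧ ∀ t : ℝ, T ≤ t → x t ∈ U) := by
  have hD : Continuous fun p : (Fin n → ℝ) × (Fin n → ℝ) =>
      (d p.1 wl p.2 wu, d p.2 wu p.1 wl) :=
    (hd.1.continuous.comp ((continuous_fst.prodMk continuous_const).prodMk
      (continuous_snd.prodMk continuous_const))).prodMk
    (hd.1.continuous.comp ((continuous_snd.prodMk continuous_const).prodMk
      (continuous_fst.prodMk continuous_const)))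
  obtain ⟨heq, heqh⟩ : d xeq wl xheq wu = 0 ∧ d xheq wu xeq wl = 0 :=
    Prod.ext_iff.1 <| apply_eq_zero_of_tendsto_of_hasDerivAt hD.continuousAt
      ((eventually_ge_atTop 0).mono fun t ht => (ha t ht).prodMk (hah t ht))
      (hlim.prodMk_nhds hlimh)
  refine ⟨fun T _ x w hw _ hx hx0 => ?_, fun x w hw _ hx hx0 U hU hUsub => ?_⟩
  · exact hd.mem_Icc_of_embedding hwlu (a := fun _ => xeq) (ah := fun _ => xheq)
      (fun t _ => by simpa [heq] using hasDerivAt_const t xeq)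
      (fun t _ => by simpa [heqh] using hasDerivAt_const t xheq) hw hx hx0
  · have hsand : ∀ t, 0 ≤ t → x t ∈ Icc (a t) (ah t) := fun t ht =>
      hd.mem_Icc_of_embedding hwlu (fun s hs => ha s hs.1) (fun s hs => hah s hs.1)
        (fun s hs => hw s hs.1) (fun s hs => hx s hs.1) hx0 t ⟨ht, le_rfl⟩
    obtain ⟨T, hT⟩ := eventually_atTop.1 <|
      (eventually_Icc_subset_of_tendsto hlim hlimh hU hUsub).and (eventually_ge_atTop 0)
    exact ⟨max T 1, by positivity, fun t ht =>
      (hT t (le_of_max_le_left ht)).1 (hsand t (hT t (le_of_max_le_left ht)).2)⟩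

/-- Theorem 1, Part 3: with `(x_eq, x̂_eq)` the limit of the embedding
solution started in `𝒮`, the hyperrectangle `[x_eq, x̂_eq]` is robustly forward invariant
for `ẋ = F(x, w)` and is attractive from `[a(0), â(0)]`. -/
theorem thm1_part3_invariant_and_attractive
    {n m : ℕ} (wl wu : Fin m → ℝ) (hwlu : wl ≤ wu)
    (F : (Fin n → ℝ) → (Fin m → ℝ) → (Fin n → ℝ))
    (d : (Fin n → ℝ) → (Fin m → ℝ) → (Fin n → ℝ) → (Fin m → ℝ) → (Fin n → ℝ))
    (hd : IsDecompositionFunction wl wu F d)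
    -- (a, ah) solves the deterministic embedding ODE on [0, ∞)
    (a ah : ℝ → (Fin n → ℝ))
    (ha : ∀ t ∈ Set.Ici (0:ℝ), HasDerivAt a (d (a t) wl (ah t) wu) t)
    (hah : ∀ t ∈ Set.Ici (0:ℝ), HasDerivAt ah (d (ah t) wu (a t) wl) t)
    -- (a 0, ah 0) ∈ 𝒮
    (h0tri : a 0 ≤ ah 0)
    (h0SE : (0 : Fin n → ℝ) ≤ d (a 0) wl (ah 0) wu ∧ d (ah 0) wu (a 0) wl ≤ (0 : Fin n → ℝ))
    -- (xeq, xheq) is the limit of the embedding solution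
    (xeq xheq : Fin n → ℝ)
    (hlim : Filter.Tendsto a Filter.atTop (nhds xeq))
    (hlimh : Filter.Tendsto ah Filter.atTop (nhds xheq)) :
    -- [xeq, xheq] is robustly forward invariant for ẋ = F(x, w)
    (∀ T : ℝ, 0 ≤ T →
      ∀ (x : ℝ → (Fin n → ℝ)) (w : ℝ → (Fin m → ℝ)),
        (∀ t ∈ Set.Icc (0:ℝ) T, w t ∈ Set.Icc wl wu) →
        PiecewiseContinuousOn w (Set.Icc 0 T) →
        (∀ t ∈ Set.Icc (0:ℝ) T, HasDerivAt x (F (x t) (w t)) t) →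
        x 0 ∈ Set.Icc xeq xheq →
        ∀ t ∈ Set.Icc (0:ℝ) T, x t ∈ Set.Icc xeq xheq) ∧
    -- [xeq, xheq] is attractive from [a 0, ah 0]
    (∀ (x : ℝ → (Fin n → ℝ)) (w : ℝ → (Fin m → ℝ)),
      (∀ t ∈ Set.Ici (0:ℝ), w t ∈ Set.Icc wl wu) →
      PiecewiseContinuousOn w (Set.Ici 0) →
      (∀ t ∈ Set.Ici (0:ℝ), HasDerivAt x (F (x t) (w t)) t) →
      x 0 ∈ Set.Icc (a 0) (ah 0) →
      ∀ U : Set (Fin n → ℝ), IsOpen U → Set.Icc xeq xheq ⊆ U →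
        ∃ T : ℝ, 0 < T ∧ ∀ t : ℝ, T ≤ t → x t ∈ U) :=
  thm1_part3_invariant_and_attractive_general wl wu hwlu F d hd a ah ha hah xeq xheq hlim hlimh
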